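/- Let W : ℕ → A be an infinite word over a finite alphabet A. The following conditions are equivalent: (1) W is recurrent, i.e. every factor of W occurs at infinitely many positions in W; (2) for every k ≥ 1 the Rauzy k-graph of W is strongly connected, i.e. for any two factors u, v of W of length k there exists a factor of W having u as a prefix and v as a suffix; (3) every factor of W occurs at least twice in W; (4) every factor of W can be extended to the left, i.e. for every factor u of W there exists a letter c ∈ A with cu ∈ F(W). -/
import Mathlib


/-- The finite word `u` occurs in the infinite word `W` at position `i`. -/
def occursAt {A : Type*} (W : ℕ → A) (u : List A) (i : ℕ) : Prop :=
  u = (List.range u.length).map (fun j => W (i + j))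

/-- `u` is a factor (subword) of the infinite word `W`. -/
def IsFactor {A : Type*} (W : ℕ → A) (u : List A) : Prop :=
  ∃ i, occursAt W u i

/-- `W` is recurrent: every factor occurs at infinitely many positions. -/
def Recurrent {A : Type*} (W : ℕ → A) : Prop :=
  ∀ u, IsFactor W u → ∀ N, ∃ i, N ≤ i ∧ occursAt W u i

section Aux

variable {A : Type*} (W : ℕ → A)

/-- The segment of `W` of length `n` starting at position `i`. -/
def seg (i n : ℕ) : List A := (List.range n).map (fun j => W (i + j))

@[simp] lemma seg_length (i n : ℕ) : (seg W i n).length = n := by simp [seg]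

lemma occursAt_iff {u : List A} {i : ℕ} : occursAt W u i ↔ u = seg W i u.length := Iff.rfl

lemma occursAt_seg (i n : ℕ) : occursAt W (seg W i n) i := by
  simp [occursAt, seg]

lemma seg_add (i m n : ℕ) : seg W i (m + n) = seg W i m ++ seg W (i + m) n := by
  simp [seg, List.range_add, Function.comp, add_assoc]

lemma occursAt_append {p q : List A} {i : ℕ} (h : occursAt W (p ++ q) i) :
    occursAt W p i ∧ occursAt W q (i + p.length) := by
  rw [occursAt_iff, List.length_append, seg_add] at h
  exact List.append_inj h (by simp)

lemma occursAt_append_of {p q : List A} {i : ℕ} (hp : occursAt W p i)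
    (hq : occursAt W q (i + p.length)) : occursAt W (p ++ q) i := by
  rw [occursAt_iff, List.length_append, seg_add]
  exact congrArg₂ (· ++ ·) hp hq

lemma occursAt_of_prefix {u w : List A} {i : ℕ} (h : u <+: w) (hw : occursAt W w i) :
    occursAt W u i := by
  obtain ⟨t, rfl⟩ := h
  exact (occursAt_append W hw).1

lemma occursAt_of_suffix {v w : List A} {i : ℕ} (h : v <:+ w) (hw : occursAt W w i) :
    occursAt W v (i + (w.length - v.length)) := by
  obtain ⟨t, rfl⟩ := h
  have := (occursAt_append W hw).2
  simpa using this

lemma occursAt_cons {u : List A} {i : ℕ} (h : occursAt W u (i + 1)) :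
    occursAt W (W i :: u) i := by
  have h1 : occursAt W [W i] i := rfl
  have h2 := occursAt_append_of W h1 (by simpa using h)
  simpa using h2

end Aux

/-- For an infinite word `W`, the following are equivalent: (1) `W` is
recurrent; (2) every Rauzy `k`-graph of `W` is strongly connected (between any
two factors `u`, `v` of length `k` there is a factor of `W` with prefix `u` and
suffix `v`); (3) every factor of `W` occurs at least twice; (4) every factor of
`W` extends to the left. -/
theorem recurrent_tfae {A : Type*} (W : ℕ → A) :
    List.TFAE
      [ Recurrent W,
        ∀ k : ℕ, 1 ≤ k → ∀ u v : List A, IsFactor W u → IsFactor W v →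
          u.length = k → v.length = k →
          ∃ w : List A, IsFactor W w ∧ u <+: w ∧ v <:+ w,
        ∀ u, IsFactor W u → ∃ i j : ℕ, i ≠ j ∧ occursAt W u i ∧ occursAt W u j,
        ∀ u, IsFactor W u → ∃ c : A, IsFactor W (c :: u) ] := by
  tfae_have 1 → 2 := by
    intro h k _ u v hu hv huk hvk
    obtain ⟨i, hi⟩ := hu
    obtain ⟨j, hj, hjv⟩ := h v hv i
    refine ⟨seg W i ((j - i) + k), ⟨i, occursAt_seg W i _⟩, ?_, ?_⟩
    · refine ⟨seg W (i + k) (j - i), ?_⟩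
      rw [add_comm (j - i) k, seg_add]
      congr 1
      rw [← huk]; exact hi
    · refine ⟨seg W i (j - i), ?_⟩
      rw [seg_add, Nat.add_sub_cancel' hj]
      congr 1
      rw [← hvk]; exact hjv
  tfae_have 2 → 4 := by
    intro h2 u hu
    by_contra hno
    push_neg at hno
    have key : ∀ i, occursAt W u i → i = 0 := by
      intro i hi
      rcases i with _ | i
      · rfl
      · exact absurd ⟨i, occursAt_cons W hi⟩ (hno (W i))
    obtain ⟨i0, hi0⟩ := hu
    have hi00 : i0 = 0 := key _ hi0
    subst hi00
    set k := u.length with hk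
    have hupre : u <+: seg W 0 (k + 1) :=
      ⟨seg W (0 + k) 1, by rw [seg_add]; exact congrArg₂ (· ++ ·) hi0 rfl⟩
    obtain ⟨w, ⟨iw, hw⟩, hpre, hsuf⟩ := h2 (k + 1) (by omega) (seg W 1 (k + 1))
      (seg W 0 (k + 1)) ⟨1, occursAt_seg W 1 _⟩ ⟨0, occursAt_seg W 0 _⟩ (by simp) (by simp)
    have hocc : occursAt W (seg W 0 (k + 1)) (iw + (w.length - (k + 1))) := by
      have := occursAt_of_suffix W hsuf hw
      simpa using this
    have hocc2 : occursAt W u (iw + (w.length - (k + 1))) :=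
      occursAt_of_prefix W hupre hocc
    have h0 := key _ hocc2
    have hlen : k + 1 ≤ w.length := by simpa using hsuf.length_le
    have hwlen : w.length = k + 1 := by omega
    have hwv : w = seg W 1 (k + 1) := (hpre.eq_of_length (by simp [hwlen])).symm
    have hwu : seg W 0 (k + 1) = w := hsuf.eq_of_length (by simp [hwlen])
    have : occursAt W u 1 := by
      apply occursAt_of_prefix W hupre
      rw [hwu, hwv]
      exact occursAt_seg W 1 _
    exact absurd (key _ this) one_ne_zero
  tfae_have 4 → 1 := by
    intro h u hu N
    have key : ∀ n, ∃ p : List A, p.length = n ∧ IsFactor W (p ++ u) := by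
      intro n
      induction n with
      | zero => exact ⟨[], rfl, hu⟩
      | succ n ih =>
        obtain ⟨p, hp, hf⟩ := ih
        obtain ⟨c, hc⟩ := h _ hf
        exact ⟨c :: p, by simp [hp], by rw [List.cons_append]; exact hc⟩
    obtain ⟨p, hp, i, hi⟩ := key N
    refine ⟨i + N, by omega, ?_⟩
    have := (occursAt_append W hi).2
    rwa [hp] at this
  tfae_have 1 → 3 := by
    intro h u hu
    obtain ⟨i, hi⟩ := hu
    obtain ⟨j, hj, hjo⟩ := h u ⟨i, hi⟩ (i + 1)
    exact ⟨i, j, by omega, hi, hjo⟩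
  tfae_have 3 → 4 := by
    intro h u hu
    obtain ⟨i, j, hne, hi, hj⟩ := h u hu
    rcases j with _ | j
    · rcases i with _ | i
      · exact absurd rfl hne
      · exact ⟨W i, i, occursAt_cons W hi⟩
    · exact ⟨W j, j, occursAt_cons W hj⟩
  tfae_finish
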